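/- Let ω = e^{2πi/3} ∈ ℂ and τ = ω + 2. For every natural number k with k ≡ 5 (mod 12) or k ≡ 7 (mod 12), one has |τ^k − 1|² = 1 + 3^k + 3^{(k+1)/2}. -/

import Mathlib

open Complex

/-- The primitive cube root of unity `ω = e^{2πi/3}`. -/
noncomputable def ω : ℂ := Complex.exp (2 * Real.pi * Complex.I / 3)

/-- `τ = ω + 2`. -/
noncomputable def τ : ℂ := ω + 2

/-!
Since `ω² + ω + 1 = 0`, `τ` is a root of `X² - 3X + 3`; hence `τ ^ 12 = 3 ^ 6`, `τ ^ 5 = 9τ - 27`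
and `τ ^ 7 = -27τ`, and with `Re τ = 3/2` this gives `2 Re τ^k = -3^{(k+1)/2}` for `k ≡ 5, 7 (mod 12)`.
The theorem follows from `|z - 1|² = |z|² - 2 Re z + 1` and `|τ|² = 3`.
-/

lemma sq_norm_sub_one (z : ℂ) : ‖z - 1‖ ^ 2 = ‖z‖ ^ 2 - 2 * z.re + 1 := by
  simp only [Complex.sq_norm, normSq_sub, map_one, mul_one]
  ring

lemma isPrimitiveRoot_omega : IsPrimitiveRoot ω 3 := by
  simpa [ω] using isPrimitiveRoot_exp 3 three_ne_zero

lemma omega_sq_add_omega_add_one : ω ^ 2 + ω + 1 = 0 := by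
  have h := isPrimitiveRoot_omega.geom_sum_eq_zero (by norm_num)
  simp only [Finset.sum_range_succ, Finset.sum_range_zero] at h
  linear_combination h

lemma re_omega : ω.re = -1 / 2 := by
  rw [ω, show 2 * (Real.pi : ℂ) * I / 3 = ((Real.pi - Real.pi / 3 : ℝ) : ℂ) * I by push_cast; ring,
    exp_ofReal_mul_I_re, Real.cos_pi_sub, Real.cos_pi_div_three]
  norm_num

lemma tau_sq : τ ^ 2 = 3 * τ - 3 := by
  linear_combination (norm := (rw [τ]; ring_nf)) omega_sq_add_omega_add_one

lemma re_tau : τ.re = 3 / 2 := by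
  simp only [τ, add_re, re_omega]
  norm_num

lemma sq_norm_tau : ‖τ‖ ^ 2 = 3 := by
  rw [Complex.sq_norm, τ, normSq_add, ← Complex.sq_norm,
    isPrimitiveRoot_omega.norm'_eq_one three_ne_zero]
  norm_num [re_omega]

lemma tau_pow_six : τ ^ 6 = -27 := by
  linear_combination (τ ^ 4 + 3 * τ ^ 3 + 6 * τ ^ 2 + 9 * τ + 9) * tau_sq

lemma two_mul_re_tau_pow (q : ℕ) {r : ℕ} (hr : r = 5 ∨ r = 7) :
    2 * (τ ^ (12 * q + r)).re = -3 ^ (6 * q + (r + 1) / 2) := by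
  induction q with
  | zero =>
    rcases hr with rfl | rfl
    · rw [show τ ^ (12 * 0 + 5) = 9 * τ - 27 by
        linear_combination (τ ^ 3 + 3 * τ ^ 2 + 6 * τ + 9) * tau_sq]
      norm_num [re_tau]
    · rw [show τ ^ (12 * 0 + 7) = -27 * τ by linear_combination τ * tau_pow_six]
      norm_num [re_tau]
  | succ q ih =>
    have h12 : τ ^ 12 = ((3 ^ 6 : ℝ) : ℂ) := by
      rw [show τ ^ 12 = (τ ^ 6) ^ 2 by ring, tau_pow_six]
      norm_num
    rw [show 12 * (q + 1) + r = 12 + (12 * q + r) by ring, pow_add τ, h12, re_ofReal_mul,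
      show 6 * (q + 1) + (r + 1) / 2 = 6 + (6 * q + (r + 1) / 2) by ring, pow_add (3 : ℝ)]
    linear_combination 3 ^ 6 * ih

/-- For `k ≡ ±5 (mod 12)`, one has `|τ^k − 1|² = 1 + 3^k + 3^{(k+1)/2}`. -/
theorem normSq_tau_pow_sub_one_of_five_or_seven (k : ℕ)
    (hmod : k % 12 = 5 ∨ k % 12 = 7) :
    ‖τ ^ k - 1‖ ^ 2 = 1 + (3 : ℝ) ^ k + (3 : ℝ) ^ ((k + 1) / 2) := by
  have hre := two_mul_re_tau_pow (k / 12) hmod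
  rw [Nat.div_add_mod, show 6 * (k / 12) + (k % 12 + 1) / 2 = (k + 1) / 2 by omega] at hre
  rw [sq_norm_sub_one, norm_pow, ← pow_mul, mul_comm, pow_mul, sq_norm_tau]
  linear_combination -hre
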